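/- In the graph G_{q,k} (q ≥ 1, k ≥ 1), every tree edge of H_2 joining a leaf r_i to its parent r_j satisfies EMD_{dist}(P_{r_i}, P_{r_j}) = 5/4, i.e., C_{G_{q,k}}({r_i,r_j}) = −1/4 (the parent of a leaf has degree 11); consequently the sum Λ₃ of the curvatures over all 10^k leaf edges equals −10^k/4. (This is the corrected form of claim (iv) in the proof of the paper's Theorem 1.) -/

import Mathlib

/-- Earth Mover's Distance between two distributions `μ ν : V → ℝ` w.r.t. a
cost function `d : V → V → ℝ`: the minimum (infimum) of the total transport cost
over all feasible transport plans. -/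
noncomputable def EMD {V : Type} (d : V → V → ℝ) (μ ν : V → ℝ) : ℝ :=
  sInf { c : ℝ | ∃ z : V → V → ℝ,
    (∀ u v, 0 ≤ z u v) ∧ (∀ u, ∑ᶠ v, z u v = μ u) ∧ (∀ v, ∑ᶠ u, z u v = ν v) ∧
    c = ∑ᶠ u, ∑ᶠ v, d u v * z u v }

/-- The degree of a vertex: the number of its neighbours. -/
noncomputable def degC {V : Type} (G : SimpleGraph V) (u : V) : ℕ :=
  Nat.card {x | G.Adj u x}

open Classical in
/-- The uniform probability distribution on the closed neighbourhood of `u`. -/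
noncomputable def Pdist {V : Type} (G : SimpleGraph V) (u : V) : V → ℝ :=
  fun w => if w = u ∨ G.Adj u w then ((degC G u : ℝ) + 1)⁻¹ else 0

/-- The graph distance, as a real-valued cost function. -/
noncomputable def gdist {V : Type} (G : SimpleGraph V) : V → V → ℝ :=
  fun a b => (G.dist a b : ℝ)

/-- The total variation distance between the closed-neighbourhood distributions of `u`, `v`. -/
noncomputable def tvd {V : Type} (G : SimpleGraph V) (u v : V) : ℝ :=
  (1 / 2) * ∑ᶠ w, |Pdist G u w - Pdist G v w|

/-- The Ollivier–Ricci curvature of the (ordered) pair `u v`. -/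
noncomputable def ricci {V : Type} (G : SimpleGraph V) (u v : V) : ℝ :=
  1 - EMD (gdist G) (Pdist G u) (Pdist G v)


/-- Vertices of the complete 10-ary tree of depth `k`: lists over `Fin 10` of length
at most `k`, recording the (reversed) path from the root `[]`. -/
def TreeVert (k : ℕ) : Type := { l : List (Fin 10) // l.length ≤ k }

instance (k : ℕ) : DecidableEq (TreeVert k) :=
  inferInstanceAs (DecidableEq { l : List (Fin 10) // l.length ≤ k })

instance (k : ℕ) : Fintype (TreeVert k) :=
  Fintype.ofSurjective
    (fun x : Σ j : Fin (k + 1), List.Vector (Fin 10) j =>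
      (⟨x.2.1, by have h1 := x.2.2; have h2 := x.1.isLt; omega⟩ : TreeVert k))
    (fun y => ⟨⟨⟨y.1.length, Nat.lt_succ_of_le y.2⟩, ⟨y.1, rfl⟩⟩, Subtype.ext rfl⟩)

/-- The root of the tree. -/
def treeRoot (k : ℕ) : TreeVert k := ⟨[], by simp⟩

/-- The parent of a tree vertex (the root is mapped to itself). -/
def treeParent {k : ℕ} (x : TreeVert k) : TreeVert k :=
  ⟨x.1.tail, by have h1 := x.2; have h2 : x.1.tail.length = x.1.length - 1 := List.length_tail; omega⟩

/-- The vertex set of the graph `G_{q,k}`: the two special vertices `s`, `t`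
(encoded as `Fin 2`), the vertices `p_1, …, p_q`, and the tree vertices. -/
abbrev GVert (q k : ℕ) : Type := (Fin 2 ⊕ Fin q) ⊕ TreeVert k

def vS (q k : ℕ) : GVert q k := Sum.inl (Sum.inl 0)
def vT (q k : ℕ) : GVert q k := Sum.inl (Sum.inl 1)
def vP (q k : ℕ) (i : Fin q) : GVert q k := Sum.inl (Sum.inr i)
def vTr (q k : ℕ) (x : TreeVert k) : GVert q k := Sum.inr x

/-- Base adjacency relation generating the edges of `G_{q,k}`: the edge `{s,t}`,
the edges `{p_i, s}` and `{p_i, t}`, the bridge `{t, r_1}` to the root of the tree,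
and the parent-child tree edges. -/
def gadjBase (q k : ℕ) : GVert q k → GVert q k → Prop := fun x y =>
  (x = vS q k ∧ y = vT q k) ∨
  (∃ i : Fin q, x = vP q k i ∧ (y = vS q k ∨ y = vT q k)) ∨
  (x = vT q k ∧ y = vTr q k (treeRoot k)) ∨
  (∃ u v : TreeVert k, x = vTr q k u ∧ y = vTr q k v ∧ ∃ a : Fin 10, u.1 = a :: v.1)

/-- The graph `G_{q,k}` from the proof of the paper's Theorem 1
(with `q` playing the role of `√n`). -/
def Gqk (q k : ℕ) : SimpleGraph (GVert q k) := SimpleGraph.fromRel (gadjBase q k)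

/-- `N_k = (10^(k+1) - 1)/9`, the number of vertices of the complete 10-ary tree of depth `k`. -/
def Nk (k : ℕ) : ℕ := (10 ^ (k + 1) - 1) / 9

/-! Let `x` be a leaf whose neighbour `p` has degree `d`. Then `P_x` is uniform on `{x, p}`, while
`P_p` gives `1/(d+1)` to `x`, to `p` and to each of the other `d - 1` neighbours of `p`. An optimal
plan leaves `1/(d+1)` at `x` and at `p` and spreads the remaining `1/2 - 1/(d+1)` of each over the
other neighbours, which are at distance `2` from `x` and `1` from `p`; it costs `3/2 - 3/(d+1)`, and
the `1`-Lipschitz potential `max 0 (2 - dist x ·)` shows that nothing cheaper exists. In `G_{q,k}`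
the parent of a leaf has its ten children and one neighbour towards `t`, so `d = 11` and the
distance is `5/4`. -/

open Finset

section Transport

variable {V : Type} [Fintype V] {d : V → V → ℝ} {μ ν : V → ℝ}

lemma sum_sum_sub_mul_eq_of_marginals (f : V → ℝ) {z : V → V → ℝ}
    (hrow : ∀ u, ∑ v, z u v = μ u) (hcol : ∀ v, ∑ u, z u v = ν v) :
    ∑ u, ∑ v, (f u - f v) * z u v = ∑ u, f u * μ u - ∑ v, f v * ν v := by
  simp only [sub_mul, sum_sub_distrib, ← mul_sum, hrow]
  rw [sum_comm]
  simp only [← mul_sum, hcol]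

theorem EMD_eq_of_complementary_slackness (z : V → V → ℝ) (f : V → ℝ)
    (hz : ∀ u v, 0 ≤ z u v) (hrow : ∀ u, ∑ v, z u v = μ u) (hcol : ∀ v, ∑ u, z u v = ν v)
    (hf : ∀ u v, f u - f v ≤ d u v) (hslack : ∀ u v, z u v ≠ 0 → d u v = f u - f v) :
    EMD d μ ν = ∑ u, f u * μ u - ∑ v, f v * ν v := by
  have hcost : ∑ u, ∑ v, d u v * z u v = ∑ u, f u * μ u - ∑ v, f v * ν v := by
    rw [← sum_sum_sub_mul_eq_of_marginals f hrow hcol]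
    refine sum_congr rfl fun u _ => sum_congr rfl fun v _ => ?_
    by_cases h : z u v = 0
    · simp [h]
    · rw [hslack u v h]
  have hlower : ∀ c ∈ {c : ℝ | ∃ z : V → V → ℝ,
      (∀ u v, 0 ≤ z u v) ∧ (∀ u, ∑ᶠ v, z u v = μ u) ∧ (∀ v, ∑ᶠ u, z u v = ν v) ∧
      c = ∑ᶠ u, ∑ᶠ v, d u v * z u v}, ∑ u, f u * μ u - ∑ v, f v * ν v ≤ c := by
    rintro c ⟨z', hz', hrow', hcol', rfl⟩
    simp only [finsum_eq_sum_of_fintype] at hrow' hcol' ⊢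
    rw [← sum_sum_sub_mul_eq_of_marginals f hrow' hcol']
    exact sum_le_sum fun u _ => sum_le_sum fun v _ =>
      mul_le_mul_of_nonneg_right (hf u v) (hz' u v)
  have hmem : ∑ u, f u * μ u - ∑ v, f v * ν v ∈ {c : ℝ | ∃ z : V → V → ℝ,
      (∀ u v, 0 ≤ z u v) ∧ (∀ u, ∑ᶠ v, z u v = μ u) ∧ (∀ v, ∑ᶠ u, z u v = ν v) ∧
      c = ∑ᶠ u, ∑ᶠ v, d u v * z u v} :=
    ⟨z, hz, by simpa only [finsum_eq_sum_of_fintype] using hrow,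
      by simpa only [finsum_eq_sum_of_fintype] using hcol,
      by simp only [finsum_eq_sum_of_fintype, hcost]⟩
  exact le_antisymm (csInf_le ⟨_, hlower⟩ hmem) (le_csInf ⟨_, hmem⟩ hlower)

end Transport

section Neighbourhood

variable {V : Type} (G : SimpleGraph V)

lemma Pdist_nonneg (u w : V) : 0 ≤ Pdist G u w := by
  unfold Pdist; split_ifs <;> positivity

lemma Pdist_of_adj {u w : V} (h : G.Adj u w) : Pdist G u w = ((degC G u : ℝ) + 1)⁻¹ := by
  simp [Pdist, h]

lemma Pdist_self (u : V) : Pdist G u u = ((degC G u : ℝ) + 1)⁻¹ := by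
  simp [Pdist]

lemma Pdist_ne_zero_iff {u w : V} : Pdist G u w ≠ 0 ↔ w = u ∨ G.Adj u w := by
  unfold Pdist; split_ifs with h <;> simp [h]; positivity

lemma sum_Pdist [Fintype V] (u : V) : ∑ w, Pdist G u w = 1 := by
  classical
  have hdeg : degC G u = G.degree u := by
    rw [degC, ← G.card_neighborSet_eq_degree, ← Nat.card_eq_fintype_card]; rfl
  have hsupp : ∀ w, (w = u ∨ G.Adj u w) ↔ w ∈ insert u (G.neighborFinset u) := by simp
  simp only [Pdist, hsupp, sum_ite_mem, univ_inter, sum_const, nsmul_eq_mul]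
  rw [card_insert_of_notMem (by simp), G.card_neighborFinset_eq_degree, ← hdeg]
  push_cast
  field_simp

end Neighbourhood

lemma sum_ite_eq_or_eq {V : Type} [Fintype V] [DecidableEq V] {x p : V} (hxp : x ≠ p)
    (g : V → ℝ) : ∑ u, (if u = x ∨ u = p then g u else 0) = g x + g p := by
  have hpair : ∀ u, (u = x ∨ u = p) ↔ u ∈ ({x, p} : Finset V) := by simp
  simp only [hpair, sum_ite_mem, univ_inter, sum_pair hxp]

lemma max_zero_sub_dist_sub_le {V : Type} {G : SimpleGraph V} (hG : G.Connected)
    (r : ℝ) (x u v : V) : max 0 (r - gdist G x u) - max 0 (r - gdist G x v) ≤ gdist G u v := by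
  have htri : gdist G x v ≤ gdist G x u + gdist G u v := by
    unfold gdist; exact_mod_cast hG.dist_triangle
  refine sub_le_iff_le_add'.2 (max_le ?_ ?_)
  · exact add_nonneg (le_max_left _ _) (Nat.cast_nonneg _)
  · linarith [le_max_right 0 (r - gdist G x v)]

section PendantEdge

variable {V : Type} {G : SimpleGraph V} {x p : V}

lemma degC_eq_one_of_leaf (hleaf : ∀ w, G.Adj x w ↔ w = p) : degC G x = 1 := by
  rw [degC, show {w | G.Adj x w} = {p} from Set.ext hleaf, Nat.card_unique]

lemma dist_eq_two_of_leaf (hleaf : ∀ w, G.Adj x w ↔ w = p) {v : V} (hpv : G.Adj p v)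
    (hvx : v ≠ x) : G.dist x v = 2 := by
  have hxp : G.Adj x p := (hleaf p).2 rfl
  have hle : G.dist x v ≤ 2 := by simpa using G.dist_le (.cons hxp (.cons hpv .nil))
  have hne0 : G.dist x v ≠ 0 :=
    ((hxp.reachable.trans hpv.reachable).dist_eq_zero_iff).not.2 hvx.symm
  have hne1 : G.dist x v ≠ 1 := by
    rw [Ne, SimpleGraph.dist_eq_one_iff_adj, hleaf]; exact hpv.ne.symm
  omega

section Plan

variable [DecidableEq V]

lemma Pdist_of_leaf (hleaf : ∀ w, G.Adj x w ↔ w = p) (w : V) :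
    Pdist G x w = if w = x ∨ w = p then 1 / 2 else 0 := by
  simp only [Pdist, hleaf, degC_eq_one_of_leaf hleaf]
  norm_num

variable (G x p) in
noncomputable def pendantRest (v : V) : ℝ := if v = x ∨ v = p then 0 else Pdist G p v

variable (G x p) in
noncomputable def pendantPlan (u v : V) : ℝ :=
  if u = x ∨ u = p then (if v = u then Pdist G p u else 0) + pendantRest G x p v / 2 else 0

lemma sum_pendantRest [Fintype V] (hxp : G.Adj x p) :
    ∑ v, pendantRest G x p v = 1 - 2 * ((degC G p : ℝ) + 1)⁻¹ := by
  have hsplit : ∀ v, Pdist G p v =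
      pendantRest G x p v + if v = x ∨ v = p then Pdist G p v else 0 := by
    intro v; unfold pendantRest; split_ifs <;> ring
  have hsum := sum_Pdist G p
  rw [sum_congr rfl fun v _ => hsplit v, sum_add_distrib, sum_ite_eq_or_eq hxp.ne,
    Pdist_of_adj G hxp.symm, Pdist_self] at hsum
  linarith

lemma pendantPlan_nonneg (u v : V) : 0 ≤ pendantPlan G x p u v := by
  have := Pdist_nonneg G p u
  have := Pdist_nonneg G p v
  unfold pendantPlan pendantRest; split_ifs <;> linarith

lemma sum_pendantPlan_row [Fintype V] (hleaf : ∀ w, G.Adj x w ↔ w = p) (u : V) :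
    ∑ v, pendantPlan G x p u v = Pdist G x u := by
  have hxp : G.Adj x p := (hleaf p).2 rfl
  rw [Pdist_of_leaf hleaf]
  unfold pendantPlan
  split_ifs with hu
  · have hPu : Pdist G p u = ((degC G p : ℝ) + 1)⁻¹ := by
      rcases hu with rfl | rfl
      · exact Pdist_of_adj G hxp.symm
      · exact Pdist_self G u
    rw [sum_add_distrib, sum_ite_eq', if_pos (mem_univ _), ← sum_div, sum_pendantRest hxp, hPu]
    ring
  · simp

lemma sum_pendantPlan_col [Fintype V] (hxp : G.Adj x p) (v : V) :
    ∑ u, pendantPlan G x p u v = Pdist G p v := by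
  unfold pendantPlan
  rw [sum_ite_eq_or_eq hxp.ne]
  unfold pendantRest
  by_cases hvx : v = x
  · subst hvx; simp [hxp.ne]
  by_cases hvp : v = p
  · subst hvp; simp [hxp.ne.symm]
  simp [hvx, hvp]

lemma pendantPlan_ne_zero {u v : V} (h : pendantPlan G x p u v ≠ 0) :
    (u = x ∨ u = p) ∧ (v = u ∨ G.Adj p v ∧ v ≠ x ∧ v ≠ p) := by
  unfold pendantPlan pendantRest at h
  split_ifs at h <;> simp_all [Pdist_ne_zero_iff]

end Plan

theorem EMD_Pdist_of_leaf [Fintype V] (hG : G.Connected) (hleaf : ∀ w, G.Adj x w ↔ w = p) :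
    EMD (gdist G) (Pdist G x) (Pdist G p) = 3 / 2 - 3 / ((degC G p : ℝ) + 1) := by
  classical
  have hxp : G.Adj x p := (hleaf p).2 rfl
  set f : V → ℝ := fun w => max 0 (2 - gdist G x w) with hf
  have hfx : f x = 2 := by simp [hf, gdist]
  have hfp : f p = 1 := by simp [hf, gdist, SimpleGraph.dist_eq_one_iff_adj.2 hxp]; norm_num
  have hfv : ∀ v, G.Adj p v → v ≠ x → f v = 0 := fun v hpv hvx => by
    simp [hf, gdist, dist_eq_two_of_leaf hleaf hpv hvx]
  have hslack : ∀ u v, pendantPlan G x p u v ≠ 0 → gdist G u v = f u - f v := by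
    intro u v h
    obtain ⟨rfl | rfl, rfl | ⟨hpv, hvx, -⟩⟩ := pendantPlan_ne_zero h
    · simp [gdist]
    · rw [hfx, hfv v hpv hvx, gdist, dist_eq_two_of_leaf hleaf hpv hvx]; norm_num
    · simp [gdist]
    · rw [hfp, hfv v hpv hvx, gdist, SimpleGraph.dist_eq_one_iff_adj.2 hpv]; norm_num
  have hfν : ∀ w, f w * Pdist G p w = if w = x ∨ w = p then f w * Pdist G p w else 0 := by
    intro w
    split_ifs with hw
    · rfl
    by_cases hν : Pdist G p w = 0
    · rw [hν, mul_zero]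
    obtain ⟨hwx, hwp⟩ := not_or.1 hw
    have hpw : G.Adj p w := ((Pdist_ne_zero_iff G).1 hν).resolve_left hwp
    rw [hfv w hpw hwx, zero_mul]
  rw [EMD_eq_of_complementary_slackness (pendantPlan G x p) f pendantPlan_nonneg
    (sum_pendantPlan_row hleaf) (sum_pendantPlan_col hxp) (max_zero_sub_dist_sub_le hG 2 x)
    hslack]
  simp only [Pdist_of_leaf hleaf, mul_ite, mul_zero, sum_ite_eq_or_eq hxp.ne]
  rw [sum_congr rfl fun w _ => hfν w, sum_ite_eq_or_eq hxp.ne, Pdist_of_adj G hxp.symm,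
    Pdist_self, hfx, hfp]
  ring

end PendantEdge

section TreeGraph

variable {q k : ℕ}

lemma vTr_injective : Function.Injective (vTr q k) := fun _ _ h => Sum.inr_injective h

lemma Gqk_adj_vTr_inl {u : TreeVert k} {w : Fin 2 ⊕ Fin q} :
    (Gqk q k).Adj (vTr q k u) (Sum.inl w) ↔ u = treeRoot k ∧ w = Sum.inl 1 := by
  simp [Gqk, gadjBase, vS, vT, vP, vTr, and_comm]

lemma Gqk_adj_vTr_vTr {u v : TreeVert k} :
    (Gqk q k).Adj (vTr q k u) (vTr q k v) ↔ (∃ a, u.1 = a :: v.1) ∨ ∃ a, v.1 = a :: u.1 := by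
  have hne : ((∃ a, u.1 = a :: v.1) ∨ ∃ a, v.1 = a :: u.1) → u ≠ v := by
    rintro (⟨a, h⟩ | ⟨a, h⟩) rfl <;> simpa using congrArg List.length h
  simpa [Gqk, gadjBase, vS, vT, vP, vTr] using hne

lemma eq_treeParent_iff {y v : TreeVert k} (hy : y ≠ treeRoot k) :
    v = treeParent y ↔ ∃ a, y.1 = a :: v.1 := by
  obtain ⟨_ | ⟨b, l⟩, hl⟩ := y
  · exact absurd rfl hy
  · simp only [treeParent, List.tail_cons, List.cons.injEq, exists_eq_left']
    exact ⟨fun h => h ▸ rfl, fun h => Subtype.ext h.symm⟩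

def treeUp (y : TreeVert k) : GVert q k :=
  if y = treeRoot k then vT q k else vTr q k (treeParent y)

lemma Gqk_adj_vTr_iff (y : TreeVert k) (w : GVert q k) :
    (Gqk q k).Adj (vTr q k y) w ↔ w = treeUp y ∨ ∃ v, w = vTr q k v ∧ ∃ a, v.1 = a :: y.1 := by
  rcases w with w | v
  · rw [Gqk_adj_vTr_inl]
    by_cases hy : y = treeRoot k <;> simp [treeUp, hy, vT, vTr]
  · change (Gqk q k).Adj (vTr q k y) (vTr q k v) ↔ vTr q k v = _ ∨ ∃ u, vTr q k v = vTr q k u ∧ _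
    rw [Gqk_adj_vTr_vTr]
    by_cases hy : y = treeRoot k
    · subst hy; rw [treeUp, if_pos rfl]; simp [vT, vTr, treeRoot]
    · simp [treeUp, hy, vTr_injective.eq_iff, eq_treeParent_iff hy]

lemma treeUp_ne_vTr_of_child {y v : TreeVert k} {a : Fin 10} (hv : v.1 = a :: y.1) :
    treeUp y ≠ vTr q k v := by
  unfold treeUp
  split_ifs
  · simp [vT, vTr]
  · intro h
    have := congrArg List.length (congrArg Subtype.val (vTr_injective h))
    simp [treeParent, hv] at this

lemma Gqk_adj_leaf_iff (hk : 1 ≤ k) {x : TreeVert k} (hx : x.1.length = k) (w : GVert q k) :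
    (Gqk q k).Adj (vTr q k x) w ↔ w = vTr q k (treeParent x) := by
  have hroot : x ≠ treeRoot k := by rintro rfl; simp only [treeRoot, List.length_nil] at hx; omega
  have hchild : ∀ v : TreeVert k, ∀ a, v.1 ≠ a :: x.1 := fun v a h => by
    have := v.2; rw [h, List.length_cons] at this; omega
  simp [Gqk_adj_vTr_iff, treeUp, hroot, hchild]

lemma degC_Gqk_vTr_of_length_lt {y : TreeVert k} (hy : y.1.length < k) :
    degC (Gqk q k) (vTr q k y) = 11 := by
  let child (a : Fin 10) : TreeVert k := ⟨a :: y.1, by rw [List.length_cons]; omega⟩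
  let nbr (o : Option (Fin 10)) : GVert q k := o.elim (treeUp y) (vTr q k ∘ child)
  have hnbr : {w | (Gqk q k).Adj (vTr q k y) w} = Set.range nbr := by
    ext w
    simp only [Set.mem_ofPred_eq, Gqk_adj_vTr_iff, Set.mem_range, Option.exists, nbr,
      Option.elim, Function.comp, eq_comm (a := w)]
    refine or_congr Iff.rfl ⟨?_, ?_⟩
    · rintro ⟨v, rfl, a, hv⟩
      exact ⟨a, congrArg _ (Subtype.ext hv.symm)⟩
    · rintro ⟨a, rfl⟩
      exact ⟨_, rfl, a, rfl⟩
  have hinj : nbr.Injective := by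
    rintro (_ | a) (_ | b) h
    · rfl
    · exact absurd h (treeUp_ne_vTr_of_child rfl)
    · exact absurd h.symm (treeUp_ne_vTr_of_child rfl)
    · exact congrArg some (List.cons.inj (congrArg Subtype.val (vTr_injective h))).1
  rw [degC, hnbr, Nat.card_range_of_injective hinj]
  simp

lemma Gqk_reachable_vT_vTr (l : List (Fin 10)) (hl : l.length ≤ k) :
    (Gqk q k).Reachable (vT q k) (vTr q k ⟨l, hl⟩) := by
  induction l with
  | nil => exact (Gqk_adj_vTr_inl.2 ⟨rfl, rfl⟩).reachable.symm
  | cons a l ih =>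
    exact (ih (by rw [List.length_cons] at hl; omega)).trans (Gqk_adj_vTr_vTr.2 (.inr ⟨a, rfl⟩)).reachable

theorem Gqk_connected : (Gqk q k).Connected := by
  have hreach : ∀ w, (Gqk q k).Reachable (vT q k) w := by
    rintro ((i | i) | ⟨l, hl⟩)
    · fin_cases i
      · exact SimpleGraph.Adj.reachable (by simp [Gqk, gadjBase, vS, vT])
      · rfl
    · exact SimpleGraph.Adj.reachable (by simp [Gqk, gadjBase, vT, vP])
    · exact Gqk_reachable_vT_vTr l hl
  exact ⟨fun u v => (hreach u).symm.trans (hreach v)⟩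

lemma card_leaves : #{x : TreeVert k | x.1.length = k} = 10 ^ k := by
  rw [← Fintype.card_subtype]
  calc _ = Fintype.card (List.Vector (Fin 10) k) :=
        Fintype.card_congr
          { toFun := fun x => ⟨x.1.1, x.2⟩
            invFun := fun v => ⟨⟨v.1, v.2.le⟩, v.2⟩ }
    _ = 10 ^ k := by simp

end TreeGraph

theorem leaf_edges_curvature_general (q k : ℕ) (hk : 1 ≤ k) :
    (∀ x : TreeVert k, x.1.length = k →
      degC (Gqk q k) (vTr q k (treeParent x)) = 11 ∧
      EMD (gdist (Gqk q k)) (Pdist (Gqk q k) (vTr q k x))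
          (Pdist (Gqk q k) (vTr q k (treeParent x))) = 5 / 4 ∧
      ricci (Gqk q k) (vTr q k x) (vTr q k (treeParent x)) = -(1 / 4)) ∧
    (∑ x ∈ Finset.univ.filter (fun x : TreeVert k => x.1.length = k),
        ricci (Gqk q k) (vTr q k x) (vTr q k (treeParent x))) = -((10 : ℝ) ^ k) / 4 := by
  have hdeg : ∀ x : TreeVert k, x.1.length = k → degC (Gqk q k) (vTr q k (treeParent x)) = 11 :=
    fun x hx => degC_Gqk_vTr_of_length_lt (by simp only [treeParent, List.length_tail]; omega)
  have hEMD : ∀ x : TreeVert k, x.1.length = k → EMD (gdist (Gqk q k))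
      (Pdist (Gqk q k) (vTr q k x)) (Pdist (Gqk q k) (vTr q k (treeParent x))) = 5 / 4 :=
    fun x hx => by
      rw [EMD_Pdist_of_leaf Gqk_connected (Gqk_adj_leaf_iff hk hx), hdeg x hx]
      norm_num
  have hricci : ∀ x : TreeVert k, x.1.length = k →
      ricci (Gqk q k) (vTr q k x) (vTr q k (treeParent x)) = -(1 / 4) :=
    fun x hx => by rw [ricci, hEMD x hx]; norm_num
  refine ⟨fun x hx => ⟨hdeg x hx, hEMD x hx, hricci x hx⟩, ?_⟩
  rw [sum_congr rfl fun x hx => hricci x (mem_filter.1 hx).2, sum_const, card_leaves,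
    nsmul_eq_mul]
  push_cast
  ring

/-- In the graph `G_{q,k}` (`q ≥ 1`, `k ≥ 1`), every tree edge of `H₂`
joining a leaf `r_i` to its parent `r_j` satisfies `EMD(P_{r_i}, P_{r_j}) = 5/4`, i.e.
`C_{G_{q,k}}({r_i,r_j}) = −1/4` (the parent of a leaf has degree 11); consequently the
sum `Λ₃` of the curvatures over all `10^k` leaf edges equals `−10^k/4`. -/
theorem leaf_edges_curvature (q k : ℕ) (hq : 1 ≤ q) (hk : 1 ≤ k) :
    (∀ x : TreeVert k, x.1.length = k →
      degC (Gqk q k) (vTr q k (treeParent x)) = 11 ∧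
      EMD (gdist (Gqk q k)) (Pdist (Gqk q k) (vTr q k x))
          (Pdist (Gqk q k) (vTr q k (treeParent x))) = 5 / 4 ∧
      ricci (Gqk q k) (vTr q k x) (vTr q k (treeParent x)) = -(1 / 4)) ∧
    (∑ x ∈ Finset.univ.filter (fun x : TreeVert k => x.1.length = k),
        ricci (Gqk q k) (vTr q k x) (vTr q k (treeParent x))) = -((10 : ℝ) ^ k) / 4 :=
  leaf_edges_curvature_general q k hk
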